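/- For every n ≡ 2 (mod 4) with n > 2, the shuffle-cube SQ_n is not edge-transitive, i.e., there exist edges e and f of SQ_n such that no graph automorphism of SQ_n maps the endpoints of e onto the endpoints of f. -/
import Mathlib


/-- The `i`-th bit of a binary string of length `n` (junk value `false` out of range). -/
def bitOf {n : ℕ} (u : Fin n → Bool) (i : ℕ) : Bool :=
  if h : i < n then u ⟨i, h⟩ else false

/-- Membership of the 4-tuple `x3x2x1x0` in the set `V_{ab}`, where
`V_{00} = {1111,0001,0010,0011}`, `V_{01} = {0100,0101,0110,0111}`,
`V_{10} = {1000,1001,1010,1011}`, `V_{11} = {1100,1101,1110,1111}`. -/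
def inV (a b x3 x2 x1 x0 : Bool) : Prop :=
  (x3, x2, x1, x0) ∈ (match a, b with
    | false, false => [(true,true,true,true),(false,false,false,true),
        (false,false,true,false),(false,false,true,true)]
    | false, true  => [(false,true,false,false),(false,true,false,true),
        (false,true,true,false),(false,true,true,true)]
    | true, false  => [(true,false,false,false),(true,false,false,true),
        (true,false,true,false),(true,false,true,true)]
    | true, true   => [(true,true,false,false),(true,true,false,true),
        (true,true,true,false),(true,true,true,true)])

/-- `u` and `v` agree in all bits except in exactly one of the two bits `u_1, u_0`. -/
def lowRel {n : ℕ} (u v : Fin n → Bool) : Prop :=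
  ∃ i < 2, bitOf u i ≠ bitOf v i ∧ ∀ k, k ≠ i → bitOf u k = bitOf v k

/-- `u` and `v` agree in all bits outside the `j`-th 4-bit block
`u_{4j+1} u_{4j} u_{4j-1} u_{4j-2}`. -/
def blockAgree {n : ℕ} (u v : Fin n → Bool) (j : ℕ) : Prop :=
  ∀ k, (k < 4*j - 2 ∨ 4*j + 1 < k) → bitOf u k = bitOf v k

/-- The shuffle-cube relation: condition (i) or condition (ii). -/
def sqRel {n : ℕ} (u v : Fin n → Bool) : Prop :=
  lowRel u v ∨ ∃ j, 1 ≤ j ∧ j ≤ (n-2)/4 ∧ blockAgree u v j ∧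
    inV (bitOf u 1) (bitOf u 0)
      (xor (bitOf u (4*j+1)) (bitOf v (4*j+1)))
      (xor (bitOf u (4*j))   (bitOf v (4*j)))
      (xor (bitOf u (4*j-1)) (bitOf v (4*j-1)))
      (xor (bitOf u (4*j-2)) (bitOf v (4*j-2)))

/-- The `n`-dimensional shuffle-cube `SQ_n`. -/
def SQ (n : ℕ) : SimpleGraph (Fin n → Bool) := SimpleGraph.fromRel sqRel

private lemma bitOf_false {n : ℕ} (k : ℕ) :
    bitOf (fun _ : Fin n => false) k = false := by
  unfold bitOf; split <;> rfl

private lemma bitOf_ind {n m : ℕ} (k : ℕ) (hm : m < n) :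
    bitOf (fun i : Fin n => decide (i.val = m)) k = decide (k = m) := by
  unfold bitOf; split
  · rfl
  · next h =>
    have : k ≠ m := by omega
    simp [this]

private lemma eq_of_bitOf {n : ℕ} {u v : Fin n → Bool} (h : ∀ k, bitOf u k = bitOf v k) :
    u = v := by
  funext x
  have := h x.val
  unfold bitOf at this
  simpa [x.isLt] using this

private lemma sqRel_symm {n : ℕ} {u v : Fin n → Bool} (h : sqRel u v) : sqRel v u := by
  rcases h with ⟨i, hi, hne, hag⟩ | ⟨j, hj1, hj2, hag, hV⟩
  · exact Or.inl ⟨i, hi, hne.symm, fun k hk => (hag k hk).symm⟩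
  · refine Or.inr ⟨j, hj1, hj2, fun k hk => (hag k hk).symm, ?_⟩
    have h1 : bitOf u 1 = bitOf v 1 := hag 1 (Or.inl (by omega))
    have h0 : bitOf u 0 = bitOf v 0 := hag 0 (Or.inl (by omega))
    rw [← h1, ← h0, Bool.xor_comm (bitOf v (4*j+1)), Bool.xor_comm (bitOf v (4*j)),
      Bool.xor_comm (bitOf v (4*j-1)), Bool.xor_comm (bitOf v (4*j-2))]
    exact hV

private lemma adj_sqRel {n : ℕ} {u v : Fin n → Bool} (h : (SQ n).Adj u v) : sqRel u v := by
  rw [SQ, SimpleGraph.fromRel_adj] at h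
  rcases h.2 with h' | h'
  · exact h'
  · exact sqRel_symm h'


/-- For every `n ≡ 2 (mod 4)` with `n > 2`, the shuffle-cube `SQ_n` is not
edge-transitive: there exist edges `e, f` such that no automorphism maps the endpoints of `e`
onto the endpoints of `f`. -/
theorem SQ_not_edgeTransitive (n : ℕ) (hn : n % 4 = 2) (hn2 : 2 < n) :
    ∃ e ∈ (SQ n).edgeSet, ∃ f ∈ (SQ n).edgeSet,
      ∀ φ : SQ n ≃g SQ n, Sym2.map (⇑φ) e ≠ f := by
  have hn6 : 6 ≤ n := by omega
  have hjub : 1 ≤ (n-2)/4 := by omega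
  set u0 : Fin n → Bool := fun _ => false with hu0
  set ua : Fin n → Bool := fun i => decide (i.val = 0) with hua
  set ub : Fin n → Bool := fun i => decide (i.val = 2) with hub
  set uc : Fin n → Bool := fun i => decide (i.val = 3) with huc
  have b0 : ∀ k, bitOf u0 k = false := fun k => bitOf_false k
  have ba : ∀ k, bitOf ua k = decide (k = 0) := fun k => bitOf_ind k (by omega)
  have bb : ∀ k, bitOf ub k = decide (k = 2) := fun k => bitOf_ind k (by omega)
  have bc : ∀ k, bitOf uc k = decide (k = 3) := fun k => bitOf_ind k (by omega)
  -- adjacencies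
  have hA : (SQ n).Adj u0 ua := by
    rw [SQ, SimpleGraph.fromRel_adj]
    constructor
    · intro h
      have := congrFun h ⟨0, by omega⟩
      simp [hu0, hua] at this
    · refine Or.inl (Or.inl ⟨0, by omega, ?_, fun k hk => ?_⟩)
      · simp [b0, ba]
      · simp [b0, ba, hk]
  have hB : (SQ n).Adj u0 ub := by
    rw [SQ, SimpleGraph.fromRel_adj]
    constructor
    · intro h
      have := congrFun h ⟨2, by omega⟩
      simp [hu0, hub] at this
    · refine Or.inl (Or.inr ⟨1, le_refl 1, hjub, fun k hk => ?_, ?_⟩)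
      · have : k ≠ 2 := by omega
        simp [b0, bb, this]
      · simp [b0, bb, inV]
  have hD : (SQ n).Adj u0 uc := by
    rw [SQ, SimpleGraph.fromRel_adj]
    constructor
    · intro h
      have := congrFun h ⟨3, by omega⟩
      simp [hu0, huc] at this
    · refine Or.inl (Or.inr ⟨1, le_refl 1, hjub, fun k hk => ?_, ?_⟩)
      · have : k ≠ 3 := by omega
        simp [b0, bc, this]
      · simp [b0, bc, inV]
  have hC : (SQ n).Adj ub uc := by
    rw [SQ, SimpleGraph.fromRel_adj]
    constructor
    · intro h
      have := congrFun h ⟨2, by omega⟩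
      simp [hub, huc] at this
    · refine Or.inl (Or.inr ⟨1, le_refl 1, hjub, fun k hk => ?_, ?_⟩)
      · have h2 : k ≠ 2 := by omega
        have h3 : k ≠ 3 := by omega
        simp [bb, bc, h2, h3]
      · simp [bb, bc, inV]
  -- no common neighbor of u0 and ua
  have noCommon : ∀ w, (SQ n).Adj u0 w → (SQ n).Adj ua w → False := by
    intro w h0w haw
    have s0 : sqRel u0 w := adj_sqRel h0w
    have sa : sqRel ua w := adj_sqRel haw
    rcases s0 with ⟨i, hi2, hnei, hag⟩ | ⟨j, hj1, _, hag, hV⟩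
    · rcases (by omega : i = 0 ∨ i = 1) with rfl | rfl
      · -- w = ua, contradiction with Adj ua w
        have hw : ∀ k, bitOf w k = bitOf ua k := by
          intro k
          by_cases hk : k = 0
          · subst hk
            have h0 := hnei
            rw [b0 0] at h0
            rw [ba 0]
            simp at h0 ⊢
            exact h0
          · have := hag k hk
            rw [b0 k] at this
            rw [← this, ba k]
            simp [hk]
        exact haw.ne (eq_of_bitOf hw).symm
      · have hw1 : bitOf w 1 = true := by
          have := hnei; rw [b0 1] at this
          simpa using this.symm
        have hw0 : bitOf w 0 = false := by
          have := hag 0 (by omega)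
          rw [b0 0] at this; exact this.symm
        rcases sa with ⟨i', hi'2, _, hag'⟩ | ⟨j', hj'1, _, hag', _⟩
        · rcases (by omega : i' = 0 ∨ i' = 1) with rfl | rfl
          · have := hag' 1 (by omega)
            rw [ba 1, hw1] at this
            simp at this
          · have := hag' 0 (by omega)
            rw [ba 0, hw0] at this
            simp at this
        · have := hag' 0 (Or.inl (by omega))
          rw [ba 0, hw0] at this
          simp at this
    · -- block move from u0
      have hw0 : bitOf w 0 = false := by
        have := hag 0 (Or.inl (by omega))
        rw [b0 0] at this; exact this.symm
      simp only [b0, Bool.false_xor] at hV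
      have hkey : bitOf w (4*j-1) = true ∨ bitOf w (4*j-2) = true := by
        simp only [inV, List.mem_cons, List.mem_singleton, Prod.mk.injEq,
          List.not_mem_nil, or_false] at hV
        tauto
      rcases sa with ⟨i', hi'2, _, hag'⟩ | ⟨j', hj'1, _, hag', _⟩
      · rcases hkey with hk | hk
        · have h := hag' (4*j-1) (by omega)
          rw [ba, hk] at h
          have hne : (4*j-1 : ℕ) ≠ 0 := by omega
          simp [hne] at h
        · have h := hag' (4*j-2) (by omega)
          rw [ba, hk] at h
          have hne : (4*j-2 : ℕ) ≠ 0 := by omega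
          simp [hne] at h
      · have := hag' 0 (Or.inl (by omega))
        rw [ba 0, hw0] at this
        simp at this
  -- assemble
  refine ⟨s(u0, ua), (SQ n).mem_edgeSet.mpr hA, s(u0, ub), (SQ n).mem_edgeSet.mpr hB, ?_⟩
  intro φ hmap
  rw [Sym2.map_pair_eq, Sym2.eq_iff] at hmap
  have key : ∀ a b : Fin n → Bool, φ.symm a = u0 → φ.symm b = ua →
      (SQ n).Adj a uc → (SQ n).Adj b uc → False := by
    intro a b ha hb haa hbb
    have h1 : (SQ n).Adj (φ.symm a) (φ.symm uc) := φ.symm.map_rel_iff.mpr haa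
    have h2 : (SQ n).Adj (φ.symm b) (φ.symm uc) := φ.symm.map_rel_iff.mpr hbb
    rw [ha] at h1; rw [hb] at h2
    exact noCommon (φ.symm uc) h1 h2
  rcases hmap with ⟨h1, h2⟩ | ⟨h1, h2⟩
  · exact key u0 ub (by conv_lhs => rw [← h1]; rw [RelIso.symm_apply_apply]
      ) (by conv_lhs => rw [← h2]; rw [RelIso.symm_apply_apply]) hD hC
  · exact key ub u0 (by conv_lhs => rw [← h1]; rw [RelIso.symm_apply_apply]
      ) (by conv_lhs => rw [← h2]; rw [RelIso.symm_apply_apply]) hC hD
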